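/- For every integer k ≥ 4, every resolution refutation of the formula TPHP has pigeon-width at least k−1, i.e., it contains a clause mentioning at least k−1 pigeons. -/

import Mathlib

namespace NarrowProofs

/-- A clause is a finite set of literals; a literal is a variable together with a
sign (`true` = positive literal, `false` = negative literal). -/
abbrev Clause (V : Type) := Finset (V × Bool)

/-- Justification of a step in a resolution derivation. -/
inductive ResJust (V : Type) where
  | ax : ResJust V
  | res (i j : ℕ) (x : V) : ResJust V
  | weak (i : ℕ) : ResJust V

/-- A resolution refutation of a CNF formula `F`. -/
structure ResRefutation (V : Type) [DecidableEq V] (F : Set (Clause V)) where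
  lines : List (Clause V)
  justs : List (ResJust V)
  len_eq : justs.length = lines.length
  ne : lines ≠ []
  valid : ∀ t C, lines[t]? = some C →
    match justs[t]? with
    | some ResJust.ax => C ∈ F
    | some (ResJust.res i j x) => i < t ∧ j < t ∧ ∃ A B : Clause V,
        lines[i]? = some A ∧ lines[j]? = some B ∧
        (x, true) ∈ A ∧ (x, false) ∈ B ∧
        C = (A.erase (x, true)) ∪ (B.erase (x, false))
    | some (ResJust.weak i) => i < t ∧ ∃ A : Clause V, lines[i]? = some A ∧ A ⊆ C
    | none => False
  last_empty : lines.getLast ne = ∅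

/-- The variables of the 3-CNF pigeonhole principle `TPHP`: `q v w` and `z v w`
mention pigeon `v`. -/
inductive TVar where
  | q (v w : ℕ)
  | z (v w : ℕ)
deriving DecidableEq

/-- The pigeon mentioned by a variable of `TPHP`. -/
def TVar.pigeon : TVar → ℕ
  | .q v _ => v
  | .z v _ => v

/-- The 3-CNF pigeonhole principle formula with `k` pigeons and `k-1` holes
(1-based indices). -/
def TPHP (k : ℕ) : Set (Clause TVar) :=
  { C |
    (∃ v, 1 ≤ v ∧ v ≤ k ∧
      C = {(TVar.q v 1, true), (TVar.z v 1, true)}) ∨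
    (∃ v w, 1 ≤ v ∧ v ≤ k ∧ 1 ≤ w ∧ w ≤ k - 4 ∧
      C = {(TVar.z v w, false), (TVar.q v (w+1), true), (TVar.z v (w+1), true)}) ∨
    (∃ v, 1 ≤ v ∧ v ≤ k ∧
      C = {(TVar.z v (k-3), false), (TVar.q v (k-2), true), (TVar.q v (k-1), true)}) ∨
    (∃ v v' w, 1 ≤ v ∧ v ≤ k ∧ 1 ≤ v' ∧ v' ≤ k ∧ v ≠ v' ∧ 1 ≤ w ∧ w ≤ k - 1 ∧
      C = {(TVar.q v w, false), (TVar.q v' w, false)}) }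

/-- The pigeon-width of a clause: the number of pigeons mentioned by its
variables. -/
def pigeonWidth (C : Clause TVar) : ℕ :=
  (C.image (fun l => l.1.pigeon)).card

/-!
A Delayer-style invariant. Call a clause *falsified by a matching* if some injective map from the
pigeons it mentions into the holes `1, …, k-1` falsifies it, reading `q v w` as "pigeon `v` sits in
hole `w`" and `z v w` as "pigeon `v` sits in a hole after `w`". The empty clause has this property
and no axiom of `TPHP` does. Going backwards through a resolution step on a clause that mentions
fewer than `k-1` pigeons, a free hole remains for the pigeon of the resolved variable, so the
matching extends to it and then falsifies one of the premises. Hence a refutation whose clauses all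
mention fewer than `k-1` pigeons would lead from the empty clause to a falsified axiom.
-/

section Resolution

variable {V : Type}

def Falsifies (α : V → Bool) (C : Clause V) : Prop :=
  ∀ l ∈ C, α l.1 ≠ l.2

theorem Falsifies.mono {α : V → Bool} {A C : Clause V} (h : Falsifies α C) (hAC : A ⊆ C) :
    Falsifies α A :=
  fun l hl => h l (hAC hl)

variable [DecidableEq V]

theorem Falsifies.premise_of_resolvent {α : V → Bool} {A B : Clause V} {x : V}
    (h : Falsifies α (A.erase (x, true) ∪ B.erase (x, false))) :
    Falsifies α A ∨ Falsifies α B := by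
  cases hx : α x
  · refine .inl fun l hl => ?_
    by_cases hlx : l = (x, true)
    · simp [hlx, hx]
    · exact h l (Finset.mem_union_left _ (Finset.mem_erase.2 ⟨hlx, hl⟩))
  · refine .inr fun l hl => ?_
    by_cases hlx : l = (x, false)
    · simp [hlx, hx]
    · exact h l (Finset.mem_union_right _ (Finset.mem_erase.2 ⟨hlx, hl⟩))

theorem ResRefutation.getElem?_length_sub_one {F : Set (Clause V)} (π : ResRefutation V F) :
    π.lines[π.lines.length - 1]? = some ∅ := by
  rw [← List.getLast?_eq_getElem?, List.getLast?_eq_some_getLast π.ne, π.last_empty]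

/-- `Q` travels backwards from the empty last line towards the axioms, which it cannot reach, so it
gets stuck at a resolvent violating `R`. -/
theorem ResRefutation.exists_line_not_of_backward_invariant {F : Set (Clause V)}
    (π : ResRefutation V F) (R Q : Clause V → Prop) (hax : ∀ C ∈ F, ¬ Q C)
    (hweak : ∀ A C, A ⊆ C → Q C → Q A)
    (hres : ∀ x A B, R (A.erase (x, true) ∪ B.erase (x, false)) →
      Q (A.erase (x, true) ∪ B.erase (x, false)) → Q A ∨ Q B)
    (hempty : Q ∅) : ∃ C ∈ π.lines, ¬ R C := by
  by_contra! hR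
  have hline : ∀ (t : ℕ) (C : Clause V), π.lines[t]? = some C → ¬ Q C := by
    intro t
    induction t using Nat.strong_induction_on with
    | _ t ih =>
      intro C hC hQ
      have hv := π.valid t C hC
      rcases hj : π.justs[t]? with _ | _ | ⟨i, j, x⟩ | i <;> rw [hj] at hv
      · exact hv
      · exact hax C hv hQ
      · obtain ⟨hi, hj, A, B, hA, hB, -, -, rfl⟩ := hv
        rcases hres x A B (hR _ (List.mem_of_getElem? hC)) hQ with hQA | hQB
        · exact ih i hi A hA hQA
        · exact ih j hj B hB hQB
      · obtain ⟨hi, A, hA, hAC⟩ := hv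
        exact ih i hi A hA (hweak A C hAC hQ)
  exact hline _ ∅ π.getElem?_length_sub_one hempty

end Resolution

theorem exists_extension_injOn_insert {α β : Type*} {s : Finset α}
    {t : Finset β} {f : α → β} (hmaps : Set.MapsTo f s t) (hinj : Set.InjOn f s)
    (hcard : s.card < t.card) (a : α) :
    ∃ g : α → β, Set.EqOn g f s ∧ Set.MapsTo g (insert a ↑s) t ∧ Set.InjOn g (insert a ↑s) := by
  classical
  by_cases ha : a ∈ s
  · rw [Set.insert_eq_of_mem (Finset.mem_coe.2 ha)]
    exact ⟨f, Set.eqOn_refl _ _, hmaps, hinj⟩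
  obtain ⟨b, hbt, hbf⟩ := Finset.exists_mem_notMem_of_card_lt_card
    (Finset.card_image_le.trans_lt hcard)
  have heq : Set.EqOn (Function.update f a b) f s :=
    fun v hv => Function.update_of_ne (ne_of_mem_of_not_mem hv ha) _ _
  refine ⟨Function.update f a b, heq, ?_, ?_⟩
  · rintro v (rfl | hv)
    · simpa using hbt
    · rw [heq hv]
      exact hmaps hv
  · rw [Set.injOn_insert (Finset.mem_coe.not.2 ha), heq.injOn_iff, heq.image_eq,
      Function.update_self, ← Finset.coe_image, Finset.mem_coe]
    exact ⟨hinj, hbf⟩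

def matchingAssignment (f : ℕ → ℕ) : TVar → Bool
  | .q v w => decide (f v = w)
  | .z v w => decide (w < f v)

theorem matchingAssignment_congr {f g : ℕ → ℕ} {x : TVar} (h : f x.pigeon = g x.pigeon) :
    matchingAssignment f x = matchingAssignment g x := by
  cases x <;> simp_all [matchingAssignment, TVar.pigeon]

def pigeons (C : Clause TVar) : Finset ℕ :=
  C.image (·.1.pigeon)

theorem mem_pigeons {C : Clause TVar} {l : TVar × Bool} (hl : l ∈ C) : l.1.pigeon ∈ pigeons C :=
  Finset.mem_image_of_mem _ hl

theorem pigeons_subset_insert {A C : Clause TVar} {l : TVar × Bool} (h : A ⊆ insert l C) :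
    (pigeons A : Set ℕ) ⊆ insert l.1.pigeon ↑(pigeons C) := by
  have := Finset.image_subset_image (f := (·.1.pigeon)) h
  rw [Finset.image_insert] at this
  exact_mod_cast this

def FalsifiedByMatching (k : ℕ) (C : Clause TVar) : Prop :=
  ∃ f : ℕ → ℕ, Set.MapsTo f (pigeons C) (Set.Icc 1 (k - 1)) ∧ Set.InjOn f (pigeons C) ∧
    Falsifies (matchingAssignment f) C

namespace FalsifiedByMatching

variable {k : ℕ}

theorem of_superset {C : Clause TVar} {S : Set ℕ} {f : ℕ → ℕ} (hS : ↑(pigeons C) ⊆ S)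
    (hmaps : S.MapsTo f (Set.Icc 1 (k - 1))) (hinj : S.InjOn f)
    (h : Falsifies (matchingAssignment f) C) : FalsifiedByMatching k C :=
  ⟨f, hmaps.mono_left hS, hinj.mono hS, h⟩

theorem empty : FalsifiedByMatching k ∅ :=
  ⟨id, by simp [pigeons, Set.mapsTo_empty], by simp [pigeons], by simp [Falsifies]⟩

theorem mono {A C : Clause TVar} (h : FalsifiedByMatching k C) (hAC : A ⊆ C) :
    FalsifiedByMatching k A :=
  let ⟨_, hmaps, hinj, hf⟩ := h
  of_superset (Finset.coe_subset.2 (Finset.image_subset_image hAC)) hmaps hinj (hf.mono hAC)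

theorem premise_of_resolvent {x : TVar} {A B : Clause TVar}
    (hwidth : pigeonWidth (A.erase (x, true) ∪ B.erase (x, false)) < k - 1)
    (h : FalsifiedByMatching k (A.erase (x, true) ∪ B.erase (x, false))) :
    FalsifiedByMatching k A ∨ FalsifiedByMatching k B := by
  set C := A.erase (x, true) ∪ B.erase (x, false)
  obtain ⟨f, hmaps, hinj, hf⟩ := h
  rw [← Finset.coe_Icc] at hmaps
  obtain ⟨g, hgf, hgmaps, hginj⟩ := exists_extension_injOn_insert hmaps hinj
    (by rw [Nat.card_Icc, Nat.add_sub_cancel]; exact hwidth) x.pigeon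
  rw [Finset.coe_Icc] at hgmaps
  have hg : Falsifies (matchingAssignment g) C := fun l hl => by
    rw [matchingAssignment_congr (hgf (mem_pigeons hl))]
    exact hf l hl
  have hA : (pigeons A : Set ℕ) ⊆ insert x.pigeon ↑(pigeons C) :=
    pigeons_subset_insert ((Finset.insert_erase_subset (x, true) A).trans
      (Finset.insert_subset_insert _ Finset.subset_union_left))
  have hB : (pigeons B : Set ℕ) ⊆ insert x.pigeon ↑(pigeons C) :=
    pigeons_subset_insert ((Finset.insert_erase_subset (x, false) B).trans
      (Finset.insert_subset_insert _ Finset.subset_union_right))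
  exact hg.premise_of_resolvent.imp (of_superset hA hgmaps hginj) (of_superset hB hgmaps hginj)

end FalsifiedByMatching

theorem not_falsifiedByMatching_of_mem_TPHP {k : ℕ} {C : Clause TVar} (hC : C ∈ TPHP k) :
    ¬ FalsifiedByMatching k C := by
  rintro ⟨f, hmaps, hinj, hf⟩
  have hhole : ∀ l ∈ C, 1 ≤ f l.1.pigeon ∧ f l.1.pigeon ≤ k - 1 :=
    fun l hl => hmaps (mem_pigeons hl)
  rcases hC with ⟨v, -, -, rfl⟩ | ⟨v, w, -, -, -, -, rfl⟩ | ⟨v, -, -, rfl⟩ |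
    ⟨v, v', w, -, -, -, -, hne, -, -, rfl⟩ <;>
    simp only [Falsifies, matchingAssignment, Finset.mem_insert, Finset.mem_singleton,
      forall_eq_or_imp, forall_eq, ne_eq, decide_eq_true_eq, decide_eq_false_iff_not,
      Decidable.not_not, not_lt, not_le] at hf
  · have : 1 ≤ f v ∧ f v ≤ k - 1 := hhole _ (Finset.mem_insert_self _ _)
    omega
  · omega
  · have : 1 ≤ f v ∧ f v ≤ k - 1 := hhole _ (Finset.mem_insert_self _ _)
    omega
  · exact hne (hinj (mem_pigeons (Finset.mem_insert_self _ _))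
      (mem_pigeons (Finset.mem_insert_of_mem (Finset.mem_singleton_self _))) (hf.1.trans hf.2.symm))

theorem tphp_pigeon_width_lower_bound_general (k : ℕ)
    (π : ResRefutation TVar (TPHP k)) :
    ∃ C ∈ π.lines, k - 1 ≤ pigeonWidth C := by
  obtain ⟨C, hC, hwide⟩ := π.exists_line_not_of_backward_invariant
    (fun C => pigeonWidth C < k - 1) (FalsifiedByMatching k)
    (fun _ => not_falsifiedByMatching_of_mem_TPHP) (fun _ _ hAC hC => hC.mono hAC)
    (fun _ _ _ => FalsifiedByMatching.premise_of_resolvent) FalsifiedByMatching.empty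
  exact ⟨C, hC, not_lt.1 hwide⟩

/-- for every `k ≥ 4`, every resolution refutation of `TPHP`
has pigeon-width at least `k−1`, i.e., it contains a clause mentioning at
least `k−1` pigeons. -/
theorem tphp_pigeon_width_lower_bound (k : ℕ) (hk : 4 ≤ k)
    (π : ResRefutation TVar (TPHP k)) :
    ∃ C ∈ π.lines, k - 1 ≤ pigeonWidth C :=
  tphp_pigeon_width_lower_bound_general k π

end NarrowProofs
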